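/- Let D and D' be neighboring databases differing in exactly one keyword w* of one document k with label l_k, and let the obfuscated access pattern mechanism M output per-document counts distributed as Bernoulli(p)+Geom(1-q) if the document contains the queried keyword and Geom(1-q) otherwise, and per-label non-match counts distributed as Binomial(g_l, p) + Geom(1-q) where g_l = C_max − (number of documents with label l containing the keyword). Then for a single query for w* and any observed output a, Pr(M(D,w*)=a)/Pr(M(D',w*)=a) ≤ ((p+q(1-p))/q)·(1/(1-p)) = 1 + p/(q(1-p)). -/
import Mathlib


open Finset

/-- pmf of a geometric distribution on {0,1,2,...} with success parameter `1-q`. -/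
noncomputable def geomPMF (q : ℝ) (k : ℕ) : ℝ := q ^ k * (1 - q)

/-- pmf of a Bernoulli distribution with parameter `p`. -/
noncomputable def bernPMF (p : ℝ) (k : ℕ) : ℝ :=
  if k = 0 then 1 - p else if k = 1 then p else 0

/-- pmf of a Binomial(n, p) distribution. -/
noncomputable def binomPMF (n : ℕ) (p : ℝ) (k : ℕ) : ℝ :=
  (n.choose k : ℝ) * p ^ k * (1 - p) ^ (n - k)

/-- pmf of the sum of two independent random variables with pmfs `f` and `g`. -/
noncomputable def convPMF (f g : ℕ → ℝ) (α : ℕ) : ℝ :=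
  ∑ k ∈ Finset.range (α + 1), f k * g (α - k)

/-- Per-document count distribution: Bernoulli(p) + Geom(1-q) if the document
contains the queried keyword, Geom(1-q) otherwise. -/
noncomputable def docDist (p q : ℝ) (m : Bool) (k : ℕ) : ℝ :=
  if m then convPMF (bernPMF p) (geomPMF q) k else geomPMF q k

/-- Per-label non-match count distribution: Binomial(g, p) + Geom(1-q). -/
noncomputable def labelDist (p q : ℝ) (g : ℕ) (k : ℕ) : ℝ :=
  convPMF (binomPMF g p) (geomPMF q) k

/-- Joint density of the obfuscated access pattern for a database described by
the membership function `mem` (whether each document contains the queried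
keyword), labels `label`, and per-label binomial parameters
`g l = Cmax − #{ i | label i = l ∧ mem i }`. -/
noncomputable def mechDensity (p q : ℝ) (n L Cmax : ℕ) (label : Fin n → Fin L)
    (mem : Fin n → Bool) (a : (Fin n → ℕ) × (Fin L → ℕ)) : ℝ :=
  (∏ i, docDist p q (mem i) (a.1 i)) *
    ∏ l, labelDist p q
      (Cmax - (Finset.univ.filter (fun i => label i = l ∧ mem i = true)).card) (a.2 l)

section Aux
variable {p q : ℝ}

lemma docDist_false_eq (p q : ℝ) (x : ℕ) : docDist p q false x = geomPMF q x := rfl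

lemma docDist_true_eq (p q : ℝ) (x : ℕ) :
    docDist p q true x = convPMF (bernPMF p) (geomPMF q) x := rfl

lemma geom_pos (hq0 : 0 < q) (hq1 : q < 1) (k : ℕ) : 0 < geomPMF q k := by
  have h1 : 0 < 1 - q := by linarith
  exact mul_pos (pow_pos hq0 k) h1

lemma binom_nonneg (hp0 : 0 < p) (hp1 : p < 1) (n k : ℕ) : 0 ≤ binomPMF n p k := by
  unfold binomPMF
  have h1 : 0 < 1 - p := by linarith
  positivity

lemma binom_step (hp0 : 0 < p) (hp1 : p < 1) (n k : ℕ) :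
    (1 - p) * binomPMF n p k ≤ binomPMF (n + 1) p k := by
  have h1 : 0 < 1 - p := by linarith
  by_cases hk : k ≤ n
  · unfold binomPMF
    have h2 : n + 1 - k = (n - k) + 1 := by omega
    rw [h2, pow_succ]
    have h3 : (n.choose k : ℝ) ≤ ((n + 1).choose k : ℝ) := by
      exact_mod_cast Nat.choose_le_choose k (Nat.le_succ n)
    calc (1 - p) * ((n.choose k : ℝ) * p ^ k * (1 - p) ^ (n - k))
        = (n.choose k : ℝ) * (p ^ k * (1 - p) ^ (n - k) * (1 - p)) := by ring
      _ ≤ ((n + 1).choose k : ℝ) * (p ^ k * (1 - p) ^ (n - k) * (1 - p)) := by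
          apply mul_le_mul_of_nonneg_right h3; positivity
      _ = ((n + 1).choose k : ℝ) * p ^ k * ((1 - p) ^ (n - k) * (1 - p)) := by ring
  · have h4 : n.choose k = 0 := Nat.choose_eq_zero_of_lt (by omega)
    unfold binomPMF
    rw [h4]
    push_cast
    simp only [zero_mul, mul_zero]
    have := binom_nonneg hp0 hp1 (n + 1) k
    unfold binomPMF at this
    linarith

lemma label_nonneg (hp0 : 0 < p) (hp1 : p < 1) (hq0 : 0 < q) (hq1 : q < 1) (g x : ℕ) :
    0 ≤ labelDist p q g x := by
  unfold labelDist convPMF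
  apply Finset.sum_nonneg
  intro i _
  exact mul_nonneg (binom_nonneg hp0 hp1 g i) (geom_pos hq0 hq1 _).le

lemma label_pos (hp0 : 0 < p) (hp1 : p < 1) (hq0 : 0 < q) (hq1 : q < 1) (g x : ℕ) :
    0 < labelDist p q g x := by
  have h1 : 0 < 1 - p := by linarith
  unfold labelDist convPMF
  apply Finset.sum_pos'
  · intro i _
    exact mul_nonneg (binom_nonneg hp0 hp1 g i) (geom_pos hq0 hq1 _).le
  · refine ⟨0, by simp, ?_⟩
    have : binomPMF g p 0 = (1 - p) ^ g := by simp [binomPMF]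
    rw [this]
    exact mul_pos (pow_pos h1 g) (geom_pos hq0 hq1 _)

lemma label_step (hp0 : 0 < p) (hp1 : p < 1) (hq0 : 0 < q) (hq1 : q < 1) (g x : ℕ) :
    labelDist p q g x ≤ (1 / (1 - p)) * labelDist p q (g + 1) x := by
  have h1 : 0 < 1 - p := by linarith
  rw [one_div, ← div_eq_inv_mul, le_div_iff₀ h1, mul_comm]
  show (1 - p) * labelDist p q g x ≤ labelDist p q (g + 1) x
  unfold labelDist convPMF
  rw [Finset.mul_sum]
  apply Finset.sum_le_sum
  intro i _
  rw [← mul_assoc]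
  exact mul_le_mul_of_nonneg_right (binom_step hp0 hp1 g i) (geom_pos hq0 hq1 _).le

lemma doc_step (hp0 : 0 < p) (hp1 : p < 1) (hq0 : 0 < q) (hq1 : q < 1) (x : ℕ) :
    docDist p q true x ≤ ((q * (1 - p) + p) / q) * docDist p q false x := by
  have h1 : 0 < 1 - p := by linarith
  have h2 : 0 < 1 - q := by linarith
  show convPMF (bernPMF p) (geomPMF q) x ≤ ((q * (1 - p) + p) / q) * geomPMF q x
  match x with
  | 0 =>
    have h0 : convPMF (bernPMF p) (geomPMF q) 0 = (1 - p) * geomPMF q 0 := by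
      simp [convPMF, bernPMF]
    rw [h0]
    apply mul_le_mul_of_nonneg_right _ (geom_pos hq0 hq1 0).le
    rw [le_div_iff₀ hq0]
    nlinarith
  | s + 1 =>
    have hval : convPMF (bernPMF p) (geomPMF q) (s + 1)
        = (1 - p) * geomPMF q (s + 1) + p * geomPMF q s := by
      unfold convPMF
      have heq : ∀ j ∈ Finset.range (s + 2), bernPMF p j * geomPMF q (s + 1 - j)
          = (if j = 0 then (1 - p) * geomPMF q (s + 1) else 0)
            + (if j = 1 then p * geomPMF q s else 0) := by
        intro j _
        match j with
        | 0 => simp [bernPMF]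
        | 1 => simp [bernPMF]
        | (m + 2) => simp [bernPMF]
      rw [Finset.sum_congr rfl heq, Finset.sum_add_distrib,
        Finset.sum_ite_eq' (Finset.range (s + 2)) 0 (fun _ => (1 - p) * geomPMF q (s + 1)),
        Finset.sum_ite_eq' (Finset.range (s + 2)) 1 (fun _ => p * geomPMF q s)]
      simp
    rw [hval]
    unfold geomPMF
    rw [pow_succ]
    rw [div_mul_eq_mul_div, le_div_iff₀ hq0]
    ring_nf
    nlinarith [pow_pos hq0 s, sq_nonneg q]

end Aux

theorem osse_dp_for_documents (p q : ℝ) (hp0 : 0 < p) (hp1 : p < 1)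
    (hq0 : 0 < q) (hq1 : q < 1) (n L Cmax : ℕ) (label : Fin n → Fin L)
    (mem mem' : Fin n → Bool) (k : Fin n)
    (hmemk : mem k = true) (hmemk' : mem' k = false)
    (hagree : ∀ i, i ≠ k → mem i = mem' i)
    (hcap : ∀ l : Fin L,
      (Finset.univ.filter (fun i => label i = l ∧ mem i = true)).card ≤ Cmax)
    (a : (Fin n → ℕ) × (Fin L → ℕ)) :
    mechDensity p q n L Cmax label mem a / mechDensity p q n L Cmax label mem' a
      ≤ 1 + p / (q * (1 - p)) := by
  have h1 : 0 < 1 - p := by linarith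
  set cnt : (Fin n → Bool) → Fin L → ℕ :=
    fun m l => (Finset.univ.filter (fun i => label i = l ∧ m i = true)).card with hcnt
  -- filter equalities
  have hfil_ne : ∀ l, l ≠ label k → cnt mem l = cnt mem' l := by
    intro l hl
    apply congrArg Finset.card
    apply Finset.filter_congr
    intro i _
    by_cases hik : i = k
    · subst hik
      constructor <;> (rintro ⟨h, _⟩; exact absurd h.symm hl)
    · rw [hagree i hik]
  have hcard : cnt mem' (label k) + 1 = cnt mem (label k) := by
    have hset : Finset.univ.filter (fun i => label i = label k ∧ mem i = true)
        = insert k (Finset.univ.filter (fun i => label i = label k ∧ mem' i = true)) := by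
      ext i
      simp only [Finset.mem_filter, Finset.mem_insert, Finset.mem_univ, true_and]
      by_cases hik : i = k
      · subst hik; simp [hmemk]
      · rw [hagree i hik]; simp [hik]
    simp only [hcnt, hset]
    rw [Finset.card_insert_of_notMem (by simp [hmemk'])]
  have hle : cnt mem (label k) ≤ Cmax := hcap (label k)
  have hgsucc : Cmax - cnt mem' (label k) = (Cmax - cnt mem (label k)) + 1 := by omega
  -- decompose products
  rw [mechDensity, mechDensity]
  rw [← Finset.mul_prod_erase Finset.univ _ (Finset.mem_univ k),
      ← Finset.mul_prod_erase Finset.univ _ (Finset.mem_univ k),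
      ← Finset.mul_prod_erase Finset.univ _ (Finset.mem_univ (label k)),
      ← Finset.mul_prod_erase Finset.univ _ (Finset.mem_univ (label k))]
  have hdocrest : ∏ i ∈ Finset.univ.erase k, docDist p q (mem i) (a.1 i)
      = ∏ i ∈ Finset.univ.erase k, docDist p q (mem' i) (a.1 i) :=
    Finset.prod_congr rfl fun i hi => by rw [hagree i (Finset.mem_erase.mp hi).1]
  have hlabrest : ∏ l ∈ Finset.univ.erase (label k), labelDist p q (Cmax - cnt mem l) (a.2 l)
      = ∏ l ∈ Finset.univ.erase (label k), labelDist p q (Cmax - cnt mem' l) (a.2 l) :=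
    Finset.prod_congr rfl fun l hl => by rw [hfil_ne l (Finset.mem_erase.mp hl).1]
  rw [hmemk, hmemk', hdocrest, hlabrest, hgsucc]
  set g := Cmax - cnt mem (label k)
  set R := ∏ i ∈ Finset.univ.erase k, docDist p q (mem' i) (a.1 i) with hR
  set S := ∏ l ∈ Finset.univ.erase (label k), labelDist p q (Cmax - cnt mem' l) (a.2 l) with hS
  have hRpos : 0 < R := Finset.prod_pos fun i _ => by
    rcases Bool.eq_false_or_eq_true (mem' i) with h | h <;> rw [h]
    · rw [docDist_true_eq]
      show 0 < convPMF (bernPMF p) (geomPMF q) (a.1 i)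
      apply Finset.sum_pos'
      · intro j _
        apply mul_nonneg _ (geom_pos hq0 hq1 _).le
        unfold bernPMF
        split
        · linarith
        · split
          · linarith
          · exact le_refl _
      · refine ⟨0, by simp, ?_⟩
        have hb : bernPMF p 0 = 1 - p := rfl
        calc (0:ℝ) < (1 - p) * geomPMF q (a.1 i - 0) :=
              mul_pos h1 (geom_pos hq0 hq1 _)
          _ = bernPMF p 0 * geomPMF q (a.1 i - 0) := by rw [hb]
    · rw [docDist_false_eq]
      exact geom_pos hq0 hq1 _
  have hSpos : 0 < S := Finset.prod_pos fun l _ => label_pos hp0 hp1 hq0 hq1 _ _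
  have hD0pos : 0 < docDist p q false (a.1 k) := by
    rw [docDist_false_eq]; exact geom_pos hq0 hq1 _
  have hLpos : 0 < labelDist p q (g + 1) (a.2 (label k)) := label_pos hp0 hp1 hq0 hq1 _ _
  have hdenpos : 0 < docDist p q false (a.1 k) * R * (labelDist p q (g + 1) (a.2 (label k)) * S) :=
    mul_pos (mul_pos hD0pos hRpos) (mul_pos hLpos hSpos)
  rw [div_le_iff₀ hdenpos]
  have hd := doc_step hp0 hp1 hq0 hq1 (a.1 k)
  have hl := label_step hp0 hp1 hq0 hq1 g (a.2 (label k))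
  have hLnn : 0 ≤ labelDist p q g (a.2 (label k)) := label_nonneg hp0 hp1 hq0 hq1 _ _
  have hr1nn : 0 ≤ (q * (1 - p) + p) / q * docDist p q false (a.1 k) := by
    apply mul_nonneg _ hD0pos.le
    positivity
  have hkey : (1 + p / (q * (1 - p))) = ((q * (1 - p) + p) / q) * (1 / (1 - p)) := by
    field_simp
  calc docDist p q true (a.1 k) * R * (labelDist p q g (a.2 (label k)) * S)
      = (docDist p q true (a.1 k) * labelDist p q g (a.2 (label k))) * (R * S) := by ring
    _ ≤ ((q * (1 - p) + p) / q * docDist p q false (a.1 k)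
          * ((1 / (1 - p)) * labelDist p q (g + 1) (a.2 (label k)))) * (R * S) := by
        apply mul_le_mul_of_nonneg_right _ (mul_nonneg hRpos.le hSpos.le)
        exact mul_le_mul hd hl hLnn hr1nn
    _ = (1 + p / (q * (1 - p)))
          * (docDist p q false (a.1 k) * R * (labelDist p q (g + 1) (a.2 (label k)) * S)) := by
        rw [hkey]; ring
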